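/- arXiv:1611.04486 — 5 statements merged into one kernel-verified Lean document; each statement's English description precedes it below -/
import Mathlib

section
/- Let A = ⨁_{a ∈ ℤ/N} A_a be a ℤ/N-graded semisimple algebra over an algebraically closed field of characteristic zero such that A_0 is central in A. Then A_0 is a commutative semisimple algebra, and for every irreducible A_0-module E (necessarily 1-dimensional, with minimal idempotent e_E) and every a ∈ ℤ/N, the A_0-module A_a ⊗_{A_0} E is either zero or isomorphic to E. -/
/-!
The trace form `(x, y) ↦ tr (L_{y x})` of a finite-dimensional semisimple algebra in
characteristic zero is nondegenerate: if `f = y x` is an idempotent generator of the left ideal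
`A x`, then `tr (L_f) = dim (A f) ≠ 0`. Left multiplication by an element of nonzero degree shifts
the grading, so it has trace zero, and the form pairs `A_a` only with `A_{-a}`. Hence a nonzero
`x ∈ A_a e` admits `y ∈ A_{-a}` with `y x` nonzero in `A_0 e = K e`, and for any `x' ∈ A_a e` the
product `x' y x` exhibits `x'` as a multiple of `x`.
-/

open LinearMap Module DirectSum

section TraceForm

variable {K A : Type*} [Field K] [Ring A] [Algebra K A] [FiniteDimensional K A]

theorem exists_trace_mulLeft_mul_ne_zero [CharZero K] [IsSemisimpleRing A] {x : A}
    (hx : x ≠ 0) :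
    ∃ y : A, trace K A (mulLeft K (y * x)) ≠ 0 := by
  obtain ⟨f, hf, hspan⟩ := IsSemisimpleRing.ideal_eq_span_idempotent (Ideal.span {x})
  have hfx : f ∈ Ideal.span {x} := hspan ▸ Ideal.subset_span rfl
  obtain ⟨y, rfl⟩ := Ideal.mem_span_singleton'.mp hfx
  refine ⟨y, fun htr => ?_⟩
  have hL : mulLeft K (y * x) = 0 :=
    (hf.map (Algebra.lmul K A)).eq_zero_of_trace_eq_zero htr
  have hyx : y * x = 0 := by simpa using congr($hL 1)
  rw [hyx, Set.singleton_zero, Ideal.span_zero, Ideal.span_singleton_eq_bot] at hspan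
  exact hx hspan

variable {ι : Type*} [DecidableEq ι] [AddGroup ι] (𝒜 : ι → Submodule K A) [GradedAlgebra 𝒜]

theorem GradedAlgebra.trace_mulLeft_eq_zero_of_mem {d : ι} (hd : d ≠ 0) {z : A} (hz : z ∈ 𝒜 d) :
    trace K A (mulLeft K z) = 0 :=
  trace_eq_zero_of_mapsTo_ne (Decomposition.isInternal 𝒜) (d + ·)
    (fun _ h => hd (add_eq_right.mp h)) fun _ _ hv => SetLike.mul_mem_graded hz hv

theorem GradedAlgebra.trace_mulLeft_eq_trace_mulLeft_decompose_zero (z : A) :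
    trace K A (mulLeft K z) = trace K A (mulLeft K (decompose 𝒜 z 0 : A)) := by
  classical
  conv_lhs => rw [← sum_support_decompose 𝒜 z]
  have htrace_lin : ∀ w : A, trace K A (mulLeft K w) = (trace K A ∘ₗ LinearMap.mul K A) w := fun _ => rfl
  simp only [htrace_lin, map_sum]
  refine Finset.sum_eq_single 0 (fun i _ hi => ?_) (fun h => ?_)
  · exact trace_mulLeft_eq_zero_of_mem 𝒜 hi (decompose 𝒜 z i).2
  · simp [DFinsupp.notMem_support_iff.mp h]

theorem GradedAlgebra.exists_mem_neg_mul_ne_zero [CharZero K] [IsSemisimpleRing A]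
    {a : ι} {x : A} (hx : x ∈ 𝒜 a) (hx0 : x ≠ 0) : ∃ y ∈ 𝒜 (-a), y * x ≠ 0 := by
  obtain ⟨y, hy⟩ := exists_trace_mulLeft_mul_ne_zero (K := K) hx0
  refine ⟨decompose 𝒜 y (-a), (decompose 𝒜 y (-a)).2, fun h => hy ?_⟩
  rw [trace_mulLeft_eq_trace_mulLeft_decompose_zero 𝒜, ← neg_add_cancel a,
    coe_decompose_mul_add_of_right_mem 𝒜 hx, h, mulLeft_zero_eq_zero, map_zero]

end TraceForm

section CentralIdempotent

variable {K A ι : Type*} [Field K] [Ring A] [Algebra K A] [DecidableEq ι] [AddGroup ι]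
  {𝒜 : ι → Submodule K A} [GradedAlgebra 𝒜] {e : A}

theorem GradedAlgebra.mem_and_mul_eq_of_mem_map_mulRight (he : e ∈ 𝒜 0)
    (hidem : IsIdempotentElem e) {a : ι} {v : A} (hv : v ∈ (𝒜 a).map (mulRight K e)) :
    v ∈ 𝒜 a ∧ v * e = v := by
  obtain ⟨w, hw, rfl⟩ := hv
  exact ⟨add_zero a ▸ SetLike.mul_mem_graded hw he, by simp [mul_assoc, hidem.eq]⟩

theorem GradedAlgebra.mul_eq_smul_of_mem_map_mulRight (he : e ∈ 𝒜 0)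
    (hidem : IsIdempotentElem e) (hcomm : ∀ y : A, e * y = y * e) {ρ : A → K}
    (hρ : ∀ c ∈ 𝒜 0, c * e = ρ c • e) {a : ι} {c v : A} (hc : c ∈ 𝒜 0)
    (hv : v ∈ (𝒜 a).map (mulRight K e)) : c * v = ρ c • v := by
  have hve := (mem_and_mul_eq_of_mem_map_mulRight he hidem hv).2
  calc c * v = (c * e) * v := by rw [mul_assoc, hcomm, hve]
    _ = ρ c • v := by rw [hρ c hc, smul_mul_assoc, hcomm, hve]

theorem GradedAlgebra.mem_span_singleton_of_mem_map_mulRight (he : e ∈ 𝒜 0)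
    (hidem : IsIdempotentElem e) (hcomm : ∀ y : A, e * y = y * e) {ρ : A → K}
    (hρ : ∀ c ∈ 𝒜 0, c * e = ρ c • e) {a : ι} {x x' y : A}
    (hx : x ∈ (𝒜 a).map (mulRight K e)) (hx' : x' ∈ (𝒜 a).map (mulRight K e))
    (hy : y ∈ 𝒜 (-a)) (hyx : y * x ≠ 0) : x' ∈ K ∙ x := by
  obtain ⟨hxa, hxe⟩ := mem_and_mul_eq_of_mem_map_mulRight he hidem hx
  obtain ⟨hx'a, hx'e⟩ := mem_and_mul_eq_of_mem_map_mulRight he hidem hx'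
  obtain ⟨s, hs⟩ : ∃ s : K, y * x = s • e := ⟨ρ (y * x), by
    rw [← hρ _ (neg_add_cancel a ▸ SetLike.mul_mem_graded hy hxa), mul_assoc, hxe]⟩
  obtain ⟨t, ht⟩ : ∃ t : K, x' * y = t • e := ⟨ρ (x' * y), by
    rw [← hρ _ (add_neg_cancel a ▸ SetLike.mul_mem_graded hx'a hy), mul_assoc, ← hcomm,
      ← mul_assoc, hx'e]⟩
  have hs0 : s ≠ 0 := fun h => hyx (by rw [hs, h, zero_smul])
  have key : s • x' = t • x := by
    calc s • x' = x' * (y * x) := by rw [hs, mul_smul_comm, hx'e]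
      _ = (x' * y) * x := (mul_assoc _ _ _).symm
      _ = t • x := by rw [ht, smul_mul_assoc, hcomm, hxe]
  rw [Submodule.mem_span_singleton]
  exact ⟨s⁻¹ * t, by rw [mul_smul, ← key, inv_smul_smul₀ hs0]⟩

theorem GradedAlgebra.finrank_map_mulRight_eq_one [FiniteDimensional K A] [CharZero K]
    [IsSemisimpleRing A] (he : e ∈ 𝒜 0)
    (hidem : IsIdempotentElem e) (hcomm : ∀ y : A, e * y = y * e) {ρ : A → K}
    (hρ : ∀ c ∈ 𝒜 0, c * e = ρ c • e) {a : ι} (hne : (𝒜 a).map (mulRight K e) ≠ ⊥) :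
    finrank K ((𝒜 a).map (mulRight K e)) = 1 := by
  obtain ⟨x, hx, hx0⟩ := Submodule.exists_mem_ne_zero_of_ne_bot hne
  obtain ⟨y, hy, hyx⟩ := exists_mem_neg_mul_ne_zero 𝒜
    (mem_and_mul_eq_of_mem_map_mulRight he hidem hx).1 hx0
  have hspan : (𝒜 a).map (mulRight K e) = K ∙ x :=
    le_antisymm
      (fun x' hx' => mem_span_singleton_of_mem_map_mulRight he hidem hcomm hρ hx hx' hy hyx)
      ((Submodule.span_singleton_le_iff_mem _ _).mpr hx)
  rw [hspan, finrank_span_singleton hx0]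

end CentralIdempotent

theorem stmt4_general {K A : Type*} [Field K] [CharZero K]
    [Ring A] [Algebra K A] [FiniteDimensional K A] [IsSemisimpleRing A]
    {N : ℕ} (𝒜 : ZMod N → Submodule K A) [GradedAlgebra 𝒜]
    (hcentral : ∀ x ∈ 𝒜 0, ∀ y : A, x * y = y * x)
    (e : A) (he : e ∈ 𝒜 0) (hidem : IsIdempotentElem e)
    (ρ : A → K) (hρ : ∀ c ∈ 𝒜 0, c * e = ρ c • e) :
    (∀ x ∈ 𝒜 0, ∀ y ∈ 𝒜 0, x * y = y * x) ∧
    ∀ a : ZMod N,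
      (𝒜 a).map (LinearMap.mulRight K e) = ⊥ ∨
      (Module.finrank K ((𝒜 a).map (LinearMap.mulRight K e)) = 1 ∧
        ∀ c ∈ 𝒜 0, ∀ v ∈ (𝒜 a).map (LinearMap.mulRight K e), c * v = ρ c • v) := by
  have hcomm := hcentral e he
  refine ⟨fun x hx y _ => hcentral x hx y, fun a => or_iff_not_imp_left.mpr fun hne => ?_⟩
  exact ⟨GradedAlgebra.finrank_map_mulRight_eq_one he hidem hcomm hρ hne,
    fun c hc v hv => GradedAlgebra.mul_eq_smul_of_mem_map_mulRight he hidem hcomm hρ hc hv⟩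

/-- Let `A = ⨁_{a ∈ ℤ/N} A_a` be a `ℤ/N`-graded semisimple algebra over an
algebraically closed field `K` of characteristic zero with `A_0` central in `A`. Then `A_0` is
commutative, and for every irreducible `A_0`-module `E` (necessarily one-dimensional, cut out
by a minimal idempotent `e` with character `ρ`, so that `E ≅ A_0·e` and
`A_a ⊗_{A_0} E ≅ A_a·e`), the `A_0`-module `A_a·e` is either zero, or is one-dimensional with
`A_0` acting through the character `ρ`, i.e. isomorphic to `E`. -/
theorem stmt4 {K A : Type*} [Field K] [IsAlgClosed K] [CharZero K]
    [Ring A] [Algebra K A] [FiniteDimensional K A] [IsSemisimpleRing A]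
    {N : ℕ} (𝒜 : ZMod N → Submodule K A) [GradedAlgebra 𝒜]
    (hcentral : ∀ x ∈ 𝒜 0, ∀ y : A, x * y = y * x)
    (e : A) (he : e ∈ 𝒜 0) (hidem : IsIdempotentElem e) (hne : e ≠ 0)
    (ρ : A → K) (hρ : ∀ c ∈ 𝒜 0, c * e = ρ c • e) :
    (∀ x ∈ 𝒜 0, ∀ y ∈ 𝒜 0, x * y = y * x) ∧
    ∀ a : ZMod N,
      (𝒜 a).map (LinearMap.mulRight K e) = ⊥ ∨
      (Module.finrank K ((𝒜 a).map (LinearMap.mulRight K e)) = 1 ∧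
        ∀ c ∈ 𝒜 0, ∀ v ∈ (𝒜 a).map (LinearMap.mulRight K e), c * v = ρ c • v) :=
  stmt4_general 𝒜 hcentral e he hidem ρ hρ
end

section
/- Let A = ⨁_{a ∈ ℤ/N} A_a be a ℤ/N-graded semisimple split algebra over a field K with A_0 central in A. For each a ∈ ℤ/N, the A_0-module A_a decomposes as A_a = ⨁_E e_E A_a, where the sum runs over the characters E of A_0 with e_E A_a ≠ 0, and each nonzero summand e_E A_a is a 1-dimensional A_0-module isomorphic to E. Consequently dim A_a equals the number of characters E of A_0 with e_E A_a ≠ 0. -/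
/-- Every semisimple ring is von Neumann regular. -/
theorem stmt5_aux_vnr {A : Type*} [Ring A] [IsSemisimpleRing A] (x : A) :
    ∃ y : A, x * y * x = x := by
  obtain ⟨f, hfidem, hfspan⟩ :=
    IsSemisimpleRing.ideal_eq_span_idempotent (Ideal.span {x} : Ideal A)
  have hx1 : x ∈ Ideal.span ({f} : Set A) := by
    rw [← hfspan]; exact Ideal.mem_span_singleton_self x
  obtain ⟨u, hu⟩ := Ideal.mem_span_singleton'.mp hx1
  have hf1 : f ∈ Ideal.span ({x} : Set A) := by
    rw [hfspan]; exact Ideal.mem_span_singleton_self f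
  obtain ⟨t, ht⟩ := Ideal.mem_span_singleton'.mp hf1
  refine ⟨t, ?_⟩
  have hxf : x * f = x := by
    conv_lhs => rw [← hu]
    rw [mul_assoc, hfidem.eq, hu]
  calc x * t * x = x * (t * x) := by rw [mul_assoc]
    _ = x * f := by rw [ht]
    _ = x := hxf

set_option synthInstance.maxHeartbeats 1000000 in
/-- Extracting the relevant graded component of a von Neumann inverse. -/
theorem stmt5_aux_proj {K A : Type*} [Field K] [Ring A] [Algebra K A]
    {N : ℕ} (𝒜 : ZMod N → Submodule K A) [GradedAlgebra 𝒜] (a : ZMod N)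
    (x y : A) (hx : x ∈ 𝒜 a) (hxyx : x * y * x = x) :
    x * (DirectSum.decompose 𝒜 y (-a) : A) * x = x := by
  classical
  have hy := DirectSum.sum_support_decompose 𝒜 y
  have h1 : x = ∑ c ∈ (DirectSum.decompose 𝒜 y).support,
      x * (DirectSum.decompose 𝒜 y c : A) * x := by
    conv_lhs => rw [← hxyx]
    conv_lhs => rw [← hy]
    rw [Finset.mul_sum, Finset.sum_mul]
  have key : ∀ c ∈ (DirectSum.decompose 𝒜 y).support,
      (DirectSum.decompose 𝒜 (x * (DirectSum.decompose 𝒜 y c : A) * x) a : A)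
      = if c = -a then x * (DirectSum.decompose 𝒜 y c : A) * x else 0 := by
    intro c _
    have hmem : x * (DirectSum.decompose 𝒜 y c : A) * x ∈ 𝒜 (a + c + a) :=
      SetLike.mul_mem_graded (SetLike.mul_mem_graded hx (SetLike.coe_mem _)) hx
    by_cases hc : c = -a
    · subst hc
      rw [if_pos rfl]
      rw [show a + -a + a = a by ring] at hmem
      exact DirectSum.decompose_of_mem_same 𝒜 hmem
    · rw [if_neg hc]
      refine DirectSum.decompose_of_mem_ne 𝒜 hmem ?_
      intro h
      exact hc (eq_neg_of_add_eq_zero_right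
        (add_right_cancel (h.trans (zero_add a).symm)))
  have hπ : x = ∑ c ∈ (DirectSum.decompose 𝒜 y).support,
      (DirectSum.decompose 𝒜 (x * (DirectSum.decompose 𝒜 y c : A) * x) a : A) := by
    calc x = (DirectSum.decompose 𝒜 x a : A) :=
          (DirectSum.decompose_of_mem_same 𝒜 hx).symm
      _ = _ := by
          conv_lhs => rw [h1]
          have hds : DirectSum.decompose 𝒜
              (∑ c ∈ (DirectSum.decompose 𝒜 y).support,
                x * (DirectSum.decompose 𝒜 y c : A) * x) =
              ∑ c ∈ (DirectSum.decompose 𝒜 y).support,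
                DirectSum.decompose 𝒜 (x * (DirectSum.decompose 𝒜 y c : A) * x) :=
            map_sum (DirectSum.decomposeAddEquiv 𝒜) _ _
          rw [hds, DFinsupp.finset_sum_apply, AddSubmonoidClass.coe_finset_sum]
  rw [Finset.sum_congr rfl key, Finset.sum_ite_eq' _ (-a) _] at hπ
  by_cases hm : -a ∈ (DirectSum.decompose 𝒜 y).support
  · rw [if_pos hm] at hπ; exact hπ.symm
  · rw [if_neg hm] at hπ
    have h0 : (DirectSum.decompose 𝒜 y) (-a) = 0 := DFinsupp.notMem_support_iff.mp hm
    rw [h0, hπ]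
    simp

/-- Let `A = ⨁_{a ∈ ℤ/N} A_a` be a `ℤ/N`-graded semisimple split algebra
over a field `K` (characteristic zero) with `A_0` central, and let `(e i)` be the complete
family of minimal (character) idempotents of `A_0`: pairwise orthogonal nonzero idempotents
in `A_0` summing to `1`, with `A_0` acting on each `e i` through a character `ρ i`. Then for
each degree `a`, `A_a` decomposes as `A_a = ⨁_i (e i)·A_a` where each summand `A_a·(e i)` is
zero or one-dimensional with `A_0` acting through `ρ i`; consequently `dim A_a` equals the
number of characters `i` with `(e i)·A_a ≠ 0`. -/
theorem stmt5 {K A : Type*} [Field K] [CharZero K]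
    [Ring A] [Algebra K A] [FiniteDimensional K A] [IsSemisimpleRing A]
    {N : ℕ} (𝒜 : ZMod N → Submodule K A) [GradedAlgebra 𝒜]
    (hcentral : ∀ x ∈ 𝒜 0, ∀ y : A, x * y = y * x)
    {ι : Type*} [Fintype ι]
    (e : ι → A) (he : ∀ i, e i ∈ 𝒜 0) (hidem : ∀ i, IsIdempotentElem (e i))
    (hne : ∀ i, e i ≠ 0)
    (horth : ∀ i j, i ≠ j → e i * e j = 0)
    (hsum : ∑ i, e i = 1)
    (ρ : ι → A → K) (hρ : ∀ i, ∀ c ∈ 𝒜 0, c * e i = ρ i c • e i) :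
    ∀ a : ZMod N,
      (⨆ i, (𝒜 a).map (LinearMap.mulRight K (e i))) = 𝒜 a ∧
      (∀ i, Module.finrank K ((𝒜 a).map (LinearMap.mulRight K (e i))) ≤ 1) ∧
      (∀ i, ∀ c ∈ 𝒜 0, ∀ v ∈ (𝒜 a).map (LinearMap.mulRight K (e i)), c * v = ρ i c • v) ∧
      Module.finrank K (𝒜 a) =
        Nat.card {i : ι // (𝒜 a).map (LinearMap.mulRight K (e i)) ≠ ⊥} := by
  classical
  intro a
  -- abbreviation
  have hSdef : ∀ i (v : A), v ∈ (𝒜 a).map (LinearMap.mulRight K (e i)) ↔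
      ∃ w ∈ 𝒜 a, w * e i = v := by
    intro i v
    simp [Submodule.mem_map, LinearMap.mulRight_apply]
  -- basic facts
  have hsub : ∀ i, (𝒜 a).map (LinearMap.mulRight K (e i)) ≤ 𝒜 a := by
    intro i v hv
    obtain ⟨w, hw, rfl⟩ := (hSdef i v).mp hv
    have := SetLike.mul_mem_graded hw (he i)
    rwa [add_zero] at this
  have hSe : ∀ i (v : A), v ∈ (𝒜 a).map (LinearMap.mulRight K (e i)) → v * e i = v := by
    intro i v hv
    obtain ⟨w, hw, rfl⟩ := (hSdef i v).mp hv
    rw [mul_assoc, (hidem i).eq]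
  have hSo : ∀ i j, j ≠ i → ∀ v : A,
      v ∈ (𝒜 a).map (LinearMap.mulRight K (e j)) → v * e i = 0 := by
    intro i j hji v hv
    obtain ⟨w, hw, rfl⟩ := (hSdef j v).mp hv
    rw [mul_assoc, horth j i hji, mul_zero]
  -- the key one-dimensionality lemma
  have hcore : ∀ i (x : A), x ∈ (𝒜 a).map (LinearMap.mulRight K (e i)) → x ≠ 0 →
      (𝒜 a).map (LinearMap.mulRight K (e i)) = Submodule.span K {x} := by
    intro i x hxS hxne
    have hx : x ∈ 𝒜 a := hsub i hxS
    obtain ⟨y0, hy0⟩ := stmt5_aux_vnr x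
    set y1 : A := (DirectSum.decompose 𝒜 y0 (-a) : A) with hy1
    have hy1mem : y1 ∈ 𝒜 (-a) := SetLike.coe_mem _
    have hxy1x : x * y1 * x = x := stmt5_aux_proj 𝒜 a x y0 hx hy0
    set z : A := y1 * e i with hz
    have hzmem : z ∈ 𝒜 (-a) := by
      have := SetLike.mul_mem_graded hy1mem (he i); rwa [add_zero] at this
    have heix : e i * x = x := by
      rw [hcentral (e i) (he i) x, hSe i x hxS]
    have hzei : z * e i = z := by rw [hz, mul_assoc, (hidem i).eq]
    have hxzx : x * z * x = x := by
      have h1 : x * z * x = x * y1 * (e i * x) := by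
        rw [hz]; simp only [mul_assoc]
      rw [h1, heix]
      exact hxy1x
    have hzx0 : z * x ∈ 𝒜 0 := by
      have := SetLike.mul_mem_graded hzmem hx; rwa [neg_add_cancel] at this
    have hzx : z * x = ρ i (z * x) • e i := by
      have h2 := hρ i (z * x) hzx0
      have h3 : z * x * e i = z * x := by
        rw [mul_assoc, hSe i x hxS]
      conv_lhs => rw [← h3]
      exact h2
    have hxx : x = ρ i (z * x) • x := by
      conv_lhs => rw [← hxzx, mul_assoc, hzx, mul_smul_comm, hSe i x hxS]
    have hρ1 : ρ i (z * x) = 1 := by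
      by_contra hc
      have h4 : (ρ i (z * x) - 1) • x = 0 := by
        rw [sub_smul, one_smul, ← hxx, sub_self]
      rcases smul_eq_zero.mp h4 with h | h
      · exact hc (sub_eq_zero.mp h)
      · exact hxne h
    have hzxe : z * x = e i := by rw [hzx, hρ1, one_smul]
    apply le_antisymm
    · intro x' hx'
      have hx'a : x' ∈ 𝒜 a := hsub i hx'
      have hx'z0 : x' * z ∈ 𝒜 0 := by
        have := SetLike.mul_mem_graded hx'a hzmem; rwa [add_neg_cancel] at this
      have h1 : x' * z = ρ i (x' * z) • e i := by
        have h2 := hρ i (x' * z) hx'z0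
        have h3 : x' * z * e i = x' * z := by rw [mul_assoc, hzei]
        conv_lhs => rw [← h3]
        exact h2
      have h5 : x' = ρ i (x' * z) • x := by
        conv_lhs => rw [← hSe i x' hx', ← hzxe, ← mul_assoc, h1, smul_mul_assoc, heix]
      rw [h5]
      exact Submodule.smul_mem _ _ (Submodule.mem_span_singleton_self x)
    · rw [Submodule.span_le, Set.singleton_subset_iff]
      exact hxS
  -- part (a): the supremum
  have hsup : (⨆ i, (𝒜 a).map (LinearMap.mulRight K (e i))) = 𝒜 a := by
    apply le_antisymm (iSup_le hsub)
    intro v hv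
    have hv1 : v = ∑ i, v * e i := by rw [← Finset.mul_sum, hsum, mul_one]
    rw [hv1]
    exact Submodule.sum_mem _ fun i _ =>
      Submodule.mem_iSup_of_mem i ((hSdef i _).mpr ⟨v, hv, rfl⟩)
  -- part (b): rank at most one
  have hrank1 : ∀ i, (𝒜 a).map (LinearMap.mulRight K (e i)) ≠ ⊥ →
      Module.finrank K ((𝒜 a).map (LinearMap.mulRight K (e i))) = 1 := by
    intro i hbot
    obtain ⟨x, hxS, hxne⟩ := Submodule.exists_mem_ne_zero_of_ne_bot hbot
    rw [hcore i x hxS hxne]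
    exact finrank_span_singleton hxne
  have hb : ∀ i, Module.finrank K ((𝒜 a).map (LinearMap.mulRight K (e i))) ≤ 1 := by
    intro i
    by_cases hbot : (𝒜 a).map (LinearMap.mulRight K (e i)) = ⊥
    · rw [hbot, finrank_bot]; omega
    · rw [hrank1 i hbot]
  -- part (c): the character action
  have hc : ∀ i, ∀ c ∈ 𝒜 0, ∀ v ∈ (𝒜 a).map (LinearMap.mulRight K (e i)),
      c * v = ρ i c • v := by
    intro i c hc0 v hv
    obtain ⟨w, hw, rfl⟩ := (hSdef i v).mp hv
    calc c * (w * e i) = (w * e i) * c := hcentral c hc0 _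
      _ = w * (e i * c) := by rw [mul_assoc]
      _ = w * (c * e i) := by rw [hcentral c hc0 (e i)]
      _ = w * (ρ i c • e i) := by rw [hρ i c hc0]
      _ = ρ i c • (w * e i) := mul_smul_comm _ _ _
  -- part (d): the dimension count
  have hd : Module.finrank K (𝒜 a) =
      Nat.card {i : ι // (𝒜 a).map (LinearMap.mulRight K (e i)) ≠ ⊥} := by
    choose x hmem hxne using
      fun j : {i : ι // (𝒜 a).map (LinearMap.mulRight K (e i)) ≠ ⊥} =>
        Submodule.exists_mem_ne_zero_of_ne_bot j.2
    have hxspan := fun j : {i : ι // (𝒜 a).map (LinearMap.mulRight K (e i)) ≠ ⊥} =>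
      hcore j.1 (x j) (hmem j) (hxne j)
    have hli : LinearIndependent K x := by
      rw [Fintype.linearIndependent_iff]
      intro g hg j0
      have h0 : (∑ j, g j • x j) * e j0.1 = 0 := by rw [hg, zero_mul]
      rw [Finset.sum_mul] at h0
      have hterm : ∀ j ∈ Finset.univ, (g j • x j) * e j0.1 =
          if j = j0 then g j • x j else 0 := by
        intro j _
        by_cases hj : j = j0
        · subst hj; rw [if_pos rfl, smul_mul_assoc, hSe j.1 (x j) (hmem j)]
        · rw [if_neg hj, smul_mul_assoc,
            hSo j0.1 j.1 (fun hh => hj (Subtype.ext hh)) (x j) (hmem j), smul_zero]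
      rw [Finset.sum_congr rfl hterm, Finset.sum_ite_eq' _ _ _,
        if_pos (Finset.mem_univ _)] at h0
      rcases smul_eq_zero.mp h0 with h | h
      · exact h
      · exact absurd h (hxne j0)
    have hspan : Submodule.span K (Set.range x) = 𝒜 a := by
      apply le_antisymm
      · rw [Submodule.span_le]
        rintro _ ⟨j, rfl⟩
        exact hsub j.1 (hmem j)
      · intro v hv
        have hv1 : v = ∑ i, v * e i := by rw [← Finset.mul_sum, hsum, mul_one]
        rw [hv1]
        refine Submodule.sum_mem _ fun i _ => ?_
        have hvi : v * e i ∈ (𝒜 a).map (LinearMap.mulRight K (e i)) :=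
          (hSdef i _).mpr ⟨v, hv, rfl⟩
        by_cases hbot : (𝒜 a).map (LinearMap.mulRight K (e i)) = ⊥
        · rw [hbot] at hvi
          rw [(Submodule.mem_bot K).mp hvi]
          exact Submodule.zero_mem _
        · rw [hxspan ⟨i, hbot⟩] at hvi
          refine Submodule.span_mono ?_ hvi
          rw [Set.singleton_subset_iff]
          exact ⟨⟨i, hbot⟩, rfl⟩
    have hcard : Module.finrank K (𝒜 a) = Fintype.card
        {i : ι // (𝒜 a).map (LinearMap.mulRight K (e i)) ≠ ⊥} := by
      conv_lhs => rw [← hspan]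
      exact finrank_span_eq_card hli
    rw [hcard, Nat.card_eq_fintype_card]
  exact ⟨hsup, hb, hc, hd⟩
end

section
/- Let P and Q be permutation matrices of size n over a field of characteristic 0, and suppose there is an invertible n × n matrix X with PX = XQ. Then P and Q have the same number of fixed points (indeed the same cycle type). -/
open Equiv Matrix Finset Equiv.Perm Function

namespace BrauerAux

variable {n : ℕ}

lemma pm_mul (K : Type*) [Semiring K] (a b : Perm (Fin n)) :
    (a * b).permMatrix K = b.permMatrix K * a.permMatrix K := by
  show ((b.trans a).toPEquiv.toMatrix : Matrix (Fin n) (Fin n) K) = _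
  rw [Equiv.toPEquiv_trans, PEquiv.toMatrix_trans]

lemma pm_pow (K : Type*) [Semiring K] (g : Perm (Fin n)) (k : ℕ) :
    (g ^ k).permMatrix K = (g.permMatrix K) ^ k := by
  induction k with
  | zero =>
    rw [pow_zero, pow_zero]
    show ((Equiv.refl (Fin n)).toPEquiv.toMatrix : Matrix (Fin n) (Fin n) K) = 1
    rw [Equiv.toPEquiv_refl, PEquiv.toMatrix_refl]
  | succ k ih => rw [pow_succ, pm_mul, ih, ← pow_succ']

lemma orderOf_cycleOf_dvd_iff (g : Perm (Fin n)) (k : ℕ) (x : Fin n) :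
    (g ^ k) x = x ↔ orderOf (g.cycleOf x) ∣ k := by
  rw [orderOf_dvd_iff_pow_eq_one]
  constructor
  · intro hx
    by_cases hgx : g x = x
    · rw [(cycleOf_eq_one_iff g).mpr hgx, one_pow]
    · have hc := isCycle_cycleOf g hgx
      rw [hc.pow_eq_one_iff' (x := x) (by rwa [cycleOf_apply_self]),
        cycleOf_pow_apply_self]
      exact hx
  · intro h1
    have h2 := cycleOf_pow_apply_self g x k
    rw [h1] at h2
    simpa using h2.symm

/-- number of points whose cycle has order `d` -/
noncomputable def mfun (g : Perm (Fin n)) (d : ℕ) : ℕ :=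
  (univ.filter fun x => orderOf (g.cycleOf x) = d).card

noncomputable def ffun (g : Perm (Fin n)) (k : ℕ) : ℕ :=
  (univ.filter fun x => (g ^ k) x = x).card

lemma ffun_eq_sum (g : Perm (Fin n)) {k : ℕ} (hk : k ≠ 0) :
    ffun g k = ∑ d ∈ k.divisors, mfun g d := by
  have h1 : ffun g k = (univ.filter fun x => orderOf (g.cycleOf x) ∣ k).card := by
    unfold ffun
    congr 1
    apply Finset.filter_congr
    intro x _
    simp [orderOf_cycleOf_dvd_iff]
  rw [h1, Finset.card_eq_sum_card_fiberwise
    (f := fun x => orderOf (g.cycleOf x)) (t := k.divisors)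
    (fun x hx => Nat.mem_divisors.mpr ⟨(Finset.mem_filter.mp hx).2, hk⟩)]
  apply Finset.sum_congr rfl
  intro d hd
  unfold mfun
  congr 1
  rw [Finset.filter_filter]
  apply Finset.filter_congr
  intro x _
  constructor
  · rintro ⟨-, h⟩; exact h
  · intro h
    exact ⟨by simpa [h] using (Nat.mem_divisors.mp hd).1, h⟩

lemma mfun_eq_of_ffun_eq {σ τ : Perm (Fin n)} (hF : ∀ k, ffun σ k = ffun τ k) :
    ∀ d, mfun σ d = mfun τ d := by
  intro d
  induction d using Nat.strong_induction_on with
  | _ d IH =>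
    rcases Nat.eq_zero_or_pos d with rfl | hd
    · have hz : ∀ g : Perm (Fin n), mfun g 0 = 0 := by
        intro g
        unfold mfun
        rw [Finset.card_eq_zero, Finset.filter_eq_empty_iff]
        intro x _
        exact (orderOf_pos (g.cycleOf x)).ne'
      rw [hz, hz]
    · have hσ := ffun_eq_sum σ hd.ne'
      have hτ := ffun_eq_sum τ hd.ne'
      rw [← Nat.cons_self_properDivisors hd.ne', Finset.sum_cons] at hσ hτ
      have hp : ∑ d' ∈ d.properDivisors, mfun σ d'
          = ∑ d' ∈ d.properDivisors, mfun τ d' :=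
        Finset.sum_congr rfl fun d' hd' => IH d' (Nat.mem_properDivisors.mp hd').2
      have := hF d
      rw [hσ, hτ, hp] at this
      exact Nat.add_right_cancel this

lemma mfun_eq_mul_count (g : Perm (Fin n)) {d : ℕ} (hd : 2 ≤ d) :
    mfun g d = g.cycleType.count d * d := by
  have key : ∀ x : Fin n, orderOf (g.cycleOf x) = d → g x ≠ x := by
    intro x hx hgx
    rw [(cycleOf_eq_one_iff g).mpr hgx, orderOf_one] at hx
    omega
  unfold mfun
  rw [Finset.card_eq_sum_card_fiberwise (f := fun x => g.cycleOf x)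
    (t := g.cycleFactorsFinset.filter fun c => c.support.card = d)
    (by
      intro x hx
      obtain ⟨-, hx⟩ := Finset.mem_filter.mp hx
      have hgx := key x hx
      refine Finset.mem_filter.mpr ⟨cycleOf_mem_cycleFactorsFinset_iff.mpr
        (mem_support.mpr hgx), ?_⟩
      rw [← (isCycle_cycleOf g hgx).orderOf]
      exact hx)]
  have hfib : ∀ c ∈ g.cycleFactorsFinset.filter fun c => c.support.card = d,
      ((univ.filter fun x => orderOf (g.cycleOf x) = d).filter
        fun x => g.cycleOf x = c) = c.support := by
    intro c hc
    obtain ⟨hcmem, hcd⟩ := Finset.mem_filter.mp hc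
    have hcyc : c.IsCycle := (mem_cycleFactorsFinset_iff.mp hcmem).1
    ext x
    simp only [Finset.mem_filter, Finset.mem_univ, true_and]
    constructor
    · rintro ⟨hord, hcx⟩
      have hgx := key x hord
      rw [← hcx]
      exact mem_support_cycleOf_iff.mpr ⟨SameCycle.refl _ _, mem_support.mpr hgx⟩
    · intro hx
      have hco : c = g.cycleOf x := cycle_is_cycleOf hx hcmem
      refine ⟨?_, hco.symm⟩
      rw [← hco, hcyc.orderOf, hcd]
  rw [Finset.sum_congr rfl fun c hc => by
    rw [hfib c hc, (Finset.mem_filter.mp hc).2]]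
  rw [Finset.sum_const, smul_eq_mul]
  congr 1
  rw [cycleType_def, Multiset.count_map, Finset.card, Finset.filter_val]
  congr 1
  apply Multiset.filter_congr
  intro c _
  simp [eq_comm, Function.comp]

lemma ffun_eq_ncard (g : Perm (Fin n)) (k : ℕ) :
    (Function.fixedPoints ⇑(g ^ k)).ncard = ffun g k := by
  unfold ffun
  rw [← Set.ncard_coe_finset]
  congr 1
  ext x
  simp [Function.fixedPoints, Function.IsFixedPt]

end BrauerAux

/-- **Brauer's permutation lemma.** If two permutation matrices `P = permMatrix σ`
and `Q = permMatrix τ` of size `n` over a field of characteristic zero are conjugate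
(`P·X = X·Q` for some invertible `X`), then `σ` and `τ` have the same number of fixed points,
and indeed the same cycle type. -/
theorem stmt6 {K : Type*} [Field K] [CharZero K] {n : ℕ}
    (σ τ : Equiv.Perm (Fin n)) (X : Matrix (Fin n) (Fin n) K)
    (hX : IsUnit X)
    (h : σ.permMatrix K * X = X * τ.permMatrix K) :
    Nat.card {x : Fin n // σ x = x} = Nat.card {x : Fin n // τ x = x} ∧
    σ.cycleType = τ.cycleType := by
  classical
  letI := hX.invertible
  set P := σ.permMatrix K with hP
  set Q := τ.permMatrix K with hQ
  have hconj : ∀ k : ℕ, P ^ k * X = X * Q ^ k := by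
    intro k
    induction k with
    | zero => simp
    | succ k ih => rw [pow_succ', pow_succ', mul_assoc, ih, ← mul_assoc, h, mul_assoc]
  have htr : ∀ k : ℕ, Matrix.trace (P ^ k) = Matrix.trace (Q ^ k) := by
    intro k
    calc Matrix.trace (P ^ k) = Matrix.trace (P ^ k * X * ⅟X) := by
          rw [mul_assoc, mul_invOf_self, mul_one]
      _ = Matrix.trace (X * Q ^ k * ⅟X) := by rw [hconj]
      _ = Matrix.trace (⅟X * (X * Q ^ k)) := Matrix.trace_mul_comm _ _
      _ = Matrix.trace (Q ^ k) := by rw [← mul_assoc, invOf_mul_self, one_mul]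
  have hF : ∀ k : ℕ, BrauerAux.ffun σ k = BrauerAux.ffun τ k := by
    intro k
    have h1 := htr k
    rw [← BrauerAux.pm_pow, ← BrauerAux.pm_pow, Matrix.trace_permutation,
      Matrix.trace_permutation] at h1
    have h2 : (Function.fixedPoints ⇑(σ ^ k)).ncard = (Function.fixedPoints ⇑(τ ^ k)).ncard :=
      Nat.cast_injective h1
    rwa [BrauerAux.ffun_eq_ncard, BrauerAux.ffun_eq_ncard] at h2
  constructor
  · have h1 := hF 1
    have hcard : ∀ g : Equiv.Perm (Fin n),
        Nat.card {x : Fin n // g x = x} = BrauerAux.ffun g 1 := by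
      intro g
      rw [Nat.card_eq_fintype_card, Fintype.card_subtype, BrauerAux.ffun]
      simp
    rw [hcard, hcard, h1]
  · have hm := BrauerAux.mfun_eq_of_ffun_eq hF
    ext d
    rcases lt_or_ge d 2 with hd | hd
    · rw [Multiset.count_eq_zero_of_notMem, Multiset.count_eq_zero_of_notMem]
      · intro hmem; exact absurd (Equiv.Perm.two_le_of_mem_cycleType hmem) (not_le.mpr hd)
      · intro hmem; exact absurd (Equiv.Perm.two_le_of_mem_cycleType hmem) (not_le.mpr hd)
    · have h1 := hm d
      rw [BrauerAux.mfun_eq_mul_count σ hd, BrauerAux.mfun_eq_mul_count τ hd] at h1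
      exact Nat.eq_of_mul_eq_mul_right (by omega) h1
end

section
/- Let A = ⨁_{a ∈ ℤ/N} A_a be a ℤ/N-graded algebra over ℂ with A_0 central and commutative semisimple, equipped with a positive-definite Hermitian form ⟨c,d⟩ = τ(cd*) for a semilinear anti-involution * with A_a* = A_{-a} and τ supported in degree 0. Let ρ be a character of A_0 with minimal idempotent e_ρ such that e_ρ A_a is 1-dimensional for every a. Then every nonzero homogeneous element m ∈ e_ρ A_a is invertible in the algebra e_ρ A, and there exists m ∈ e_ρ A_1 with m^N = e_ρ; consequently ρ extends to a character ρ̃ : A → ℂ, and any two such extensions differ on A_1 by multiplication by an N-th root of unity. -/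
/-!
Since `e` is a central idempotent, `x ↦ e * x` is multiplicative and `e·A` is a unital algebra
with unit `e`. For `0 ≠ m ∈ e·A_a`, the element `m * s m` lies in `e·A_0 = ℂ e` and is nonzero by
positivity of the form, so `(ρ (m * s m))⁻¹ • e * s m` is a right inverse of `m` in `e·A_{-a}`;
an element with right inverses on both sides is invertible. For `0 ≠ m₁ ∈ e·A_1`, the invertible
element `m₁ ^ N ∈ e·A_0` is a nonzero multiple `c • e`, and rescaling `m₁` by an `N`-th root of `c`
gives `m ^ N = e`. Then `e·A_a = ℂ · e m ^ a`, and the coefficient of `e x` along `e m ^ a`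
(`x ∈ A_a`) is multiplicative, hence defines a character extending `ρ`. A character extending `ρ`
sends `e` to `1`, so it is determined on `A_1` by its value on `m`, an `N`-th root of unity.
-/

open DirectSum

theorem GradedAlgebra.exists_algHom_of_components {ι R A : Type*} [DecidableEq ι] [AddMonoid ι]
    [CommSemiring R] [Semiring A] [Algebra R A] (𝒜 : ι → Submodule R A) [GradedAlgebra 𝒜]
    (χ : ι → A →ₗ[R] R) (hone : χ 0 1 = 1)
    (hmul : ∀ i j, ∀ x ∈ 𝒜 i, ∀ y ∈ 𝒜 j, χ (i + j) (x * y) = χ i x * χ j y) :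
    ∃ g : A →ₐ[R] R, ∀ i, ∀ x ∈ 𝒜 i, g x = χ i x := by
  let g : A →ₗ[R] R :=
    toModule R ι R (fun i => χ i ∘ₗ (𝒜 i).subtype) ∘ₗ (decomposeLinearEquiv 𝒜).toLinearMap
  have hg : ∀ i, ∀ x ∈ 𝒜 i, g x = χ i x := fun i x hx => by
    simp [g, decomposeLinearEquiv_apply, decompose_of_mem 𝒜 hx, ← lof_eq_of R]
  have hg_mul (x y : A) : g (x * y) = g x * g y := by
    induction x using DirectSum.Decomposition.inductionOn 𝒜 with
    | zero => simp
    | add x x' hx hx' => simp [add_mul, hx, hx']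
    | homogeneous x =>
      induction y using DirectSum.Decomposition.inductionOn 𝒜 with
      | zero => simp
      | add y y' hy hy' => simp [mul_add, hy, hy']
      | homogeneous y =>
        rw [hg _ _ (SetLike.mul_mem_graded x.2 y.2), hg _ _ x.2, hg _ _ y.2,
          hmul _ _ _ x.2 _ y.2]
  exact ⟨AlgHom.ofLinearMap g (by rw [hg 0 1 (SetLike.one_mem_graded 𝒜), hone]) hg_mul, hg⟩

theorem Submodule.exists_smul_eq_of_finrank_eq_one {K M : Type*} [DivisionRing K]
    [AddCommGroup M] [Module K M] {p : Submodule K M} (h : Module.finrank K p = 1) {v w : M}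
    (hv : v ∈ p) (hv0 : v ≠ 0) (hw : w ∈ p) : ∃ c : K, c • v = w := by
  obtain ⟨c, hc⟩ :=
    (finrank_eq_one_iff_of_nonzero' (⟨v, hv⟩ : p) (by simpa using hv0)).mp h ⟨w, hw⟩
  exact ⟨c, congrArg Subtype.val hc⟩

namespace IsIdempotentElem

section Monoid

variable {M : Type*} [Monoid M] {e : M}

theorem mul_mul_mul_of_commute (hidem : IsIdempotentElem e) (hcomm : ∀ y, Commute e y)
    (x y : M) : e * x * (e * y) = e * (x * y) := by
  rw [mul_assoc, ← mul_assoc x, ← (hcomm x).eq, mul_assoc, ← mul_assoc e e, hidem.eq]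

theorem mul_pow_mul_pow_of_mul_eq (hidem : IsIdempotentElem e) (hcomm : ∀ y, Commute e y)
    {u v : M} (huv : u * v = e) (k : ℕ) : e * (u ^ k * v ^ k) = e := by
  induction k with
  | zero => simp
  | succ k ih =>
    calc e * (u ^ (k + 1) * v ^ (k + 1)) = e * (u ^ k * (u * v) * v ^ k) := by
          rw [pow_succ, pow_succ']; simp only [mul_assoc]
      _ = e * e * (u ^ k * v ^ k) := by
          rw [huv, ← (hcomm _).eq]; simp only [mul_assoc]
      _ = e := by rw [hidem.eq, ih]

theorem mul_eq_of_mul_eq_of_mul_eq (hcomm : ∀ y, Commute e y) {m y y' : M}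
    (hy : e * y = y) (hmy : m * y = e) (hyy' : y * y' = e) : y * m = e :=
  calc y * m = y * m * (y * y') := by rw [hyy', ← (hcomm _).eq, ← mul_assoc, hy]
    _ = e * y * y' := by rw [← mul_assoc, mul_assoc y m, hmy, (hcomm _).eq]
    _ = e := by rw [hy, hyy']

theorem mul_pow_mod (hidem : IsIdempotentElem e) (hcomm : ∀ y, Commute e y) {m : M} {N : ℕ}
    (hmN : m ^ N = e) (k : ℕ) : e * m ^ (k % N) = e * m ^ k := by
  have he_pow (q : ℕ) : e * e ^ q = e := by rw [← pow_succ', hidem.pow_succ_eq]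
  conv_rhs => rw [← Nat.mod_add_div k N, pow_add, pow_mul, hmN]
  rw [← ((hcomm _).pow_left _).eq, ← mul_assoc, he_pow]

end Monoid

theorem mul_pow_ne_zero {M : Type*} [MonoidWithZero M] {e : M} (hidem : IsIdempotentElem e)
    (hne : e ≠ 0) {m : M} {N : ℕ} [NeZero N] (hmN : m ^ N = e) (k : ℕ) : e * m ^ k ≠ 0 := by
  intro h
  obtain ⟨n, rfl⟩ : ∃ n, N = n + 1 := Nat.exists_eq_succ_of_ne_zero (NeZero.ne N)
  apply hne
  calc e = e * (m ^ (n + 1)) ^ k := by rw [hmN, ← pow_succ', hidem.pow_succ_eq]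
    _ = e * m ^ k * (m ^ k) ^ n := by rw [← pow_mul, mul_comm, pow_mul, pow_succ', mul_assoc]
    _ = 0 := by rw [h, zero_mul]

end IsIdempotentElem

section Corner

variable {ι K A : Type*} [CommSemiring K] [Semiring A] [Algebra K A]

def cornerComponent (𝒜 : ι → Submodule K A) (e : A) (i : ι) : Submodule K A :=
  (𝒜 i).map (LinearMap.mulLeft K e)

variable [AddMonoid ι] {𝒜 : ι → Submodule K A} [SetLike.GradedMonoid 𝒜] {e : A}

theorem mem_cornerComponent_iff (he : e ∈ 𝒜 0) (hidem : IsIdempotentElem e) {i : ι} {w : A} :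
    w ∈ cornerComponent 𝒜 e i ↔ w ∈ 𝒜 i ∧ e * w = w := by
  constructor
  · rintro ⟨x, hx, rfl⟩
    refine ⟨?_, by rw [LinearMap.mulLeft_apply, ← mul_assoc, hidem.eq]⟩
    simpa using SetLike.mul_mem_graded he hx
  · rintro ⟨hw, hew⟩
    exact ⟨w, hw, hew⟩

theorem pow_mem_cornerComponent (he : e ∈ 𝒜 0) (hidem : IsIdempotentElem e) {i : ι} {m : A}
    (hm : m ∈ cornerComponent 𝒜 e i) {k : ℕ} (hk : k ≠ 0) :
    m ^ k ∈ cornerComponent 𝒜 e (k • i) := by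
  rw [mem_cornerComponent_iff he hidem] at hm ⊢
  obtain ⟨n, rfl⟩ := Nat.exists_eq_succ_of_ne_zero hk
  exact ⟨SetLike.pow_mem_graded _ hm.1, by rw [pow_succ', ← mul_assoc, hm.2]⟩

end Corner

section Inverses

variable {ι K A : Type*} [AddGroup ι] [Field K] [Semiring A] [Algebra K A]
  {𝒜 : ι → Submodule K A} [SetLike.GradedMonoid 𝒜] {e : A}

theorem exists_mul_eq_and_mul_eq_of_mul_ne_zero (hcomm : ∀ y, Commute e y) (s : A → A)
    (hs_grade : ∀ i, ∀ x ∈ 𝒜 i, s x ∈ 𝒜 (-i)) (hs : ∀ x : A, x ≠ 0 → x * s x ≠ 0)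
    (he : e ∈ 𝒜 0) (hidem : IsIdempotentElem e) (hne : e ≠ 0)
    (ρ : A → K) (hρ : ∀ c ∈ 𝒜 0, c * e = ρ c • e) {i : ι} {m : A}
    (hm : m ∈ cornerComponent 𝒜 e i) (hm0 : m ≠ 0) :
    ∃ y ∈ cornerComponent 𝒜 e (-i), m * y = e ∧ y * m = e := by
  have right_inv : ∀ i, ∀ m ∈ cornerComponent 𝒜 e i, m ≠ 0 →
      ∃ y ∈ cornerComponent 𝒜 e (-i), m * y = e := by
    intro i m hm hm0
    obtain ⟨hmA, hem⟩ := (mem_cornerComponent_iff he hidem).1 hm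
    have hc0 : m * s m ∈ 𝒜 0 := by simpa using SetLike.mul_mem_graded hmA (hs_grade i m hmA)
    have hme : m * e = m := by rw [← (hcomm m).eq, hem]
    have hc : m * s m = ρ (m * s m) • e := by
      rw [← hρ _ hc0, mul_assoc, ← (hcomm _).eq, ← mul_assoc, hme]
    have hρc : ρ (m * s m) ≠ 0 := fun h => hs m hm0 (by rw [hc, h, zero_smul])
    refine ⟨(ρ (m * s m))⁻¹ • (e * s m),
      Submodule.smul_mem _ _ (Submodule.mem_map_of_mem (hs_grade i m hmA)), ?_⟩
    calc m * ((ρ (m * s m))⁻¹ • (e * s m)) = (ρ (m * s m))⁻¹ • (ρ (m * s m) • e) := by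
          rw [mul_smul_comm, ← mul_assoc, hme, ← hc]
      _ = e := by rw [smul_smul, inv_mul_cancel₀ hρc, one_smul]
  obtain ⟨y, hy, hmy⟩ := right_inv i m hm hm0
  have hy0 : y ≠ 0 := by rintro rfl; exact hne (by rw [← hmy, mul_zero])
  obtain ⟨y', -, hyy'⟩ := right_inv (-i) y hy hy0
  exact ⟨y, hy, hmy, IsIdempotentElem.mul_eq_of_mul_eq_of_mul_eq hcomm
    ((mem_cornerComponent_iff he hidem).1 hy).2 hmy hyy'⟩

end Inverses

section CyclicGrading

variable {K A : Type*} [Field K] [Ring A] [Algebra K A] {N : ℕ} [NeZero N]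
  {𝒜 : ZMod N → Submodule K A} {e : A}

theorem exists_mem_cornerComponent_pow_eq [SetLike.GradedMonoid 𝒜] [IsAlgClosed K]
    (he : e ∈ 𝒜 0) (hidem : IsIdempotentElem e) (hcomm : ∀ y, Commute e y) (hne : e ≠ 0)
    (hdim : Module.finrank K (cornerComponent 𝒜 e 0) = 1) {m₁ y₁ : A}
    (hm₁ : m₁ ∈ cornerComponent 𝒜 e 1) (hm₁y₁ : m₁ * y₁ = e) :
    ∃ m ∈ cornerComponent 𝒜 e 1, m ^ N = e := by
  have he_mem : e ∈ cornerComponent 𝒜 e 0 := (mem_cornerComponent_iff he hidem).2 ⟨he, hidem.eq⟩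
  have hpow : m₁ ^ N ∈ cornerComponent 𝒜 e 0 := by
    simpa using pow_mem_cornerComponent he hidem hm₁ (NeZero.ne N)
  have hpow0 : m₁ ^ N ≠ 0 := fun h => hne <| Eq.symm <| by
    simpa [h] using hidem.mul_pow_mul_pow_of_mul_eq hcomm hm₁y₁ N
  obtain ⟨c, hc⟩ := Submodule.exists_smul_eq_of_finrank_eq_one hdim he_mem hne hpow
  have hc0 : c ≠ 0 := by rintro rfl; exact hpow0 (by rw [← hc, zero_smul])
  obtain ⟨d, hd⟩ := IsAlgClosed.exists_pow_nat_eq c (NeZero.pos N)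
  refine ⟨d⁻¹ • m₁, Submodule.smul_mem _ _ hm₁, ?_⟩
  rw [smul_pow, ← hc, smul_smul, inv_pow, hd, inv_mul_cancel₀ hc0, one_smul]

theorem exists_algHom_mul_eq_smul_mul_pow [GradedAlgebra 𝒜] (he : e ∈ 𝒜 0)
    (hidem : IsIdempotentElem e) (hcomm : ∀ y, Commute e y) (hne : e ≠ 0)
    (hdim : ∀ a, Module.finrank K (cornerComponent 𝒜 e a) = 1) {m : A}
    (hm : m ∈ cornerComponent 𝒜 e 1) (hmN : m ^ N = e) :
    ∃ g : A →ₐ[K] K, ∀ a, ∀ x ∈ 𝒜 a, e * x = g x • (e * m ^ a.val) := by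
  let b : ZMod N → A := fun a => e * m ^ a.val
  have hb_mem (a : ZMod N) : b a ∈ cornerComponent 𝒜 e a := Submodule.mem_map_of_mem <| by
    simpa using SetLike.pow_mem_graded a.val ((mem_cornerComponent_iff he hidem).1 hm).1
  have hb_ne (a : ZMod N) : b a ≠ 0 := hidem.mul_pow_ne_zero hne hmN _
  have hb_mul (a a' : ZMod N) : b a * b a' = b (a + a') := by
    simp only [b, ZMod.val_add, hidem.mul_pow_mod hcomm hmN, pow_add,
      hidem.mul_mul_mul_of_commute hcomm]
  choose f hf using fun a => Module.Projective.exists_dual_eq_one K (hb_ne a)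
  let χ : ZMod N → A →ₗ[K] K := fun a => f a ∘ₗ LinearMap.mulLeft K e
  have hχ (a : ZMod N) (x : A) (hx : x ∈ 𝒜 a) : e * x = χ a x • b a := by
    obtain ⟨c, hc⟩ := Submodule.exists_smul_eq_of_finrank_eq_one (hdim a) (hb_mem a) (hb_ne a)
      (Submodule.mem_map_of_mem (f := LinearMap.mulLeft K e) hx)
    simp only [LinearMap.mulLeft_apply] at hc
    simp [χ, ← hc, hf]
  have hone : χ 0 1 = 1 := by simpa [χ, b] using hf 0
  have hmul (a a' : ZMod N) (x : A) (hx : x ∈ 𝒜 a) (y : A) (hy : y ∈ 𝒜 a') :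
      χ (a + a') (x * y) = χ a x * χ a' y := by
    have h : e * (x * y) = (χ a x * χ a' y) • b (a + a') := by
      rw [← hidem.mul_mul_mul_of_commute hcomm, hχ a x hx, hχ a' y hy, smul_mul_smul_comm,
        hb_mul]
    simp [χ, h, hf]
  obtain ⟨g, hg⟩ := GradedAlgebra.exists_algHom_of_components 𝒜 χ hone hmul
  exact ⟨g, fun a x hx => by rw [hg a x hx, hχ a x hx]⟩

end CyclicGrading

theorem exists_pow_eq_one_forall_apply_eq_mul {K A : Type*} [Field K] [Semiring A]
    [Algebra K A] {N : ℕ} [NeZero N] {e m : A} (hmN : m ^ N = e) {ρ₁ ρ₂ : A →ₐ[K] K}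
    (h₁ : ρ₁ e = 1) (h₂ : ρ₂ e = 1) :
    ∃ ω : K, ω ^ N = 1 ∧ ∀ (x : A) (c : K), c • m = e * x → ρ₂ x = ω * ρ₁ x := by
  have hu₁ : ρ₁ m ^ N = 1 := by rw [← map_pow, hmN, h₁]
  have hu₂ : ρ₂ m ^ N = 1 := by rw [← map_pow, hmN, h₂]
  have hρ₁m : ρ₁ m ≠ 0 := fun h => by simp [h, NeZero.ne N] at hu₁
  refine ⟨ρ₂ m / ρ₁ m, by rw [div_pow, hu₁, hu₂, div_one], fun x c hx => ?_⟩
  have key (φ : A →ₐ[K] K) (hφ : φ e = 1) : φ x = c * φ m := by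
    simpa [hφ] using (congrArg φ hx).symm
  rw [key ρ₁ h₁, key ρ₂ h₂]
  field_simp

theorem stmt7_general {A : Type*} [Ring A] [Algebra ℂ A]
    {N : ℕ} [NeZero N] (𝒜 : ZMod N → Submodule ℂ A) [GradedAlgebra 𝒜]
    (hcentral : ∀ x ∈ 𝒜 0, ∀ y : A, x * y = y * x)
    (τ : A →ₗ[ℂ] ℂ) (s : A → A)
    (hs_grade : ∀ a : ZMod N, ∀ x ∈ 𝒜 a, s x ∈ 𝒜 (-a))
    (hpos : ∀ x : A, x ≠ 0 → 0 < (τ (x * s x)).re ∧ (τ (x * s x)).im = 0)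
    (e : A) (he : e ∈ 𝒜 0) (hidem : IsIdempotentElem e) (hne : e ≠ 0)
    (ρ : A → ℂ) (hρ : ∀ c ∈ 𝒜 0, c * e = ρ c • e)
    (hdim : ∀ a : ZMod N, Module.finrank ℂ ((𝒜 a).map (LinearMap.mulLeft ℂ e)) = 1) :
    (∀ a : ZMod N, ∀ m ∈ (𝒜 a).map (LinearMap.mulLeft ℂ e), m ≠ 0 →
        ∃ y ∈ (𝒜 (-a)).map (LinearMap.mulLeft ℂ e), m * y = e ∧ y * m = e) ∧
    (∃ m ∈ (𝒜 1).map (LinearMap.mulLeft ℂ e), m ^ N = e) ∧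
    (∃ ρ' : A →ₐ[ℂ] ℂ, ∀ c ∈ 𝒜 0, ρ' c = ρ c) ∧
    (∀ ρ₁ ρ₂ : A →ₐ[ℂ] ℂ, (∀ c ∈ 𝒜 0, ρ₁ c = ρ c) → (∀ c ∈ 𝒜 0, ρ₂ c = ρ c) →
      ∃ ω : ℂ, ω ^ N = 1 ∧ ∀ m ∈ 𝒜 1, ρ₂ m = ω * ρ₁ m) := by
  have hcomm : ∀ y, Commute e y := hcentral e he
  have hs (x : A) (hx : x ≠ 0) : x * s x ≠ 0 := fun h => by simpa [h] using (hpos x hx).1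
  have hinv (a : ZMod N) (m : A) (hm : m ∈ cornerComponent 𝒜 e a) (hm0 : m ≠ 0) :=
    exists_mul_eq_and_mul_eq_of_mul_ne_zero hcomm s hs_grade hs he hidem hne ρ hρ hm hm0
  have := Module.nontrivial_of_finrank_eq_succ (hdim 1)
  obtain ⟨⟨m₁, hm₁⟩, hm₁0⟩ := exists_ne (0 : (𝒜 1).map (LinearMap.mulLeft ℂ e))
  obtain ⟨y₁, -, hm₁y₁, -⟩ := hinv 1 m₁ hm₁ (by simpa using hm₁0)
  obtain ⟨m, hm, hmN⟩ := exists_mem_cornerComponent_pow_eq he hidem hcomm hne (hdim 0) hm₁ hm₁y₁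
  have hm0 : m ≠ 0 := by rintro rfl; exact hne (by rw [← hmN, zero_pow (NeZero.ne N)])
  have hρe : ρ e = 1 := smul_left_injective ℂ hne <| by
    simpa [hidem.eq] using (hρ e he).symm
  refine ⟨hinv, ⟨m, hm, hmN⟩, ?_, fun ρ₁ ρ₂ h₁ h₂ => ?_⟩
  · obtain ⟨g, hg⟩ := exists_algHom_mul_eq_smul_mul_pow he hidem hcomm hne hdim hm hmN
    refine ⟨g, fun c hc => smul_left_injective ℂ hne ?_⟩
    simpa [(hcomm c).eq, hρ c hc] using (hg 0 c hc).symm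
  · obtain ⟨ω, hω, hωx⟩ := exists_pow_eq_one_forall_apply_eq_mul hmN
      (by rw [h₁ e he, hρe]) (by rw [h₂ e he, hρe])
    refine ⟨ω, hω, fun x hx => ?_⟩
    obtain ⟨c, hc⟩ := Submodule.exists_smul_eq_of_finrank_eq_one (hdim 1) hm hm0
      (Submodule.mem_map_of_mem (f := LinearMap.mulLeft ℂ e) hx)
    exact hωx x c hc

/-- Let `A = ⨁_{a ∈ ℤ/N} A_a` be a `ℤ/N`-graded based `*`-algebra over `ℂ`
(semilinear anti-involution `s` with `s(A_a) ⊆ A_{-a}`, trace `τ` supported in degree `0`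
with `⟨c,d⟩ = τ (c * s d)` positive definite) with `A_0` central. Let `ρ` be a character of
`A_0` with minimal idempotent `e` such that `e·A_a` is one-dimensional for every `a`. Then
every nonzero `m ∈ e·A_a` is invertible in the algebra `e·A` (with unit `e`); there exists
`m ∈ e·A_1` with `m ^ N = e`; consequently `ρ` extends to a character `ρ̃ : A → ℂ`, and any
two such extensions differ on `A_1` by multiplication by an `N`-th root of unity. -/
theorem stmt7 {A : Type*} [Ring A] [Algebra ℂ A] [FiniteDimensional ℂ A]
    {N : ℕ} [NeZero N] (𝒜 : ZMod N → Submodule ℂ A) [GradedAlgebra 𝒜]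
    (hcentral : ∀ x ∈ 𝒜 0, ∀ y : A, x * y = y * x)
    (τ : A →ₗ[ℂ] ℂ) (s : A → A)
    (hs_add : ∀ x y : A, s (x + y) = s x + s y)
    (hs_smul : ∀ (c : ℂ) (x : A), s (c • x) = (starRingEnd ℂ) c • s x)
    (hs_mul : ∀ x y : A, s (x * y) = s y * s x)
    (hs_invol : ∀ x : A, s (s x) = x)
    (hs_grade : ∀ a : ZMod N, ∀ x ∈ 𝒜 a, s x ∈ 𝒜 (-a))
    (hsupp : ∀ a : ZMod N, a ≠ 0 → ∀ x ∈ 𝒜 a, τ x = 0)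
    (hsym : ∀ x y : A, τ (x * y) = τ (y * x))
    (hpos : ∀ x : A, x ≠ 0 → 0 < (τ (x * s x)).re ∧ (τ (x * s x)).im = 0)
    (e : A) (he : e ∈ 𝒜 0) (hidem : IsIdempotentElem e) (hne : e ≠ 0)
    (ρ : A → ℂ) (hρ : ∀ c ∈ 𝒜 0, c * e = ρ c • e)
    (hdim : ∀ a : ZMod N, Module.finrank ℂ ((𝒜 a).map (LinearMap.mulLeft ℂ e)) = 1) :
    (∀ a : ZMod N, ∀ m ∈ (𝒜 a).map (LinearMap.mulLeft ℂ e), m ≠ 0 →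
        ∃ y ∈ (𝒜 (-a)).map (LinearMap.mulLeft ℂ e), m * y = e ∧ y * m = e) ∧
    (∃ m ∈ (𝒜 1).map (LinearMap.mulLeft ℂ e), m ^ N = e) ∧
    (∃ ρ' : A →ₐ[ℂ] ℂ, ∀ c ∈ 𝒜 0, ρ' c = ρ c) ∧
    (∀ ρ₁ ρ₂ : A →ₐ[ℂ] ℂ, (∀ c ∈ 𝒜 0, ρ₁ c = ρ c) → (∀ c ∈ 𝒜 0, ρ₂ c = ρ c) →
      ∃ ω : ℂ, ω ^ N = 1 ∧ ∀ m ∈ 𝒜 1, ρ₂ m = ω * ρ₁ m) :=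
  stmt7_general 𝒜 hcentral τ s hs_grade hpos e he hidem hne ρ hρ hdim
end

section
/- In the setting of a ℤ/N-graded semisimple based *-algebra A = ⨁ A_a over ℂ, let E and E' be non-isomorphic irreducible A_0-modules that both extend to irreducible A-modules Ẽ and Ẽ'. Then for every a ∈ ℤ/N, the restrictions of the characters to the degree-a component are orthogonal: ⟨χ_{Ẽ}|_{A_a}, χ_{Ẽ'}|_{A_a}⟩ = 0, where ⟨λ₁, λ₂⟩ = Σ_b λ₁(b) · conj(λ₂(b)) over the distinguished basis elements b of A_a. -/
/-!
For `c ∈ A₀`, multiplication by `c` preserves the span of the degree-`a` basis vectors, and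
orthonormality of the basis turns this into the identity
`∑_{deg b = a} c b ⊗ s(b) = ∑_{deg b = a} b ⊗ s(b) c`.
Hence for every linear `f : E' → E` the map `∑_{deg b = a} Θ(b) ∘ f ∘ Θ'(s b)` intertwines the
`A₀`-actions, so it vanishes by Schur's lemma; taking traces against rank-one maps `f` gives
`∑_{deg b = a} χ(b) χ'(s b) = 0`. Finally `χ'(s x) = conj χ'(x)`: averaging a Hermitian form over
the basis gives a positive definite form for which `Θ'(s x)` is the adjoint of `Θ'(x)`.
-/

open Finset
open scoped Matrix ComplexOrder

section Grading

variable {R M ι κ : Type*} [CommRing R] [AddCommGroup M] [Module R M] [DecidableEq κ]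
  (𝓜 : κ → Submodule R M) [DirectSum.Decomposition 𝓜]
  (b : Module.Basis ι R M) (deg : ι → κ)

theorem Module.Basis.repr_eq_zero_of_mem_of_deg_ne (hdeg : ∀ i, b i ∈ 𝓜 (deg i))
    {x : M} {d : κ} {j : ι} (hx : x ∈ 𝓜 d) (hj : deg j ≠ d) : b.repr x j = 0 := by
  let proj : M →ₗ[R] M := (𝓜 (deg j)).subtype ∘ₗ
    DirectSum.component R κ (fun k => 𝓜 k) (deg j) ∘ₗ
      (DirectSum.decomposeLinearEquiv 𝓜).toLinearMap
  have hproj : ∀ y, proj y = (DirectSum.decompose 𝓜 y (deg j) : M) := fun _ => rfl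
  have hcoord : b.coord j ∘ₗ proj = b.coord j := b.ext fun i => by
    by_cases hi : deg i = deg j
    · simp [hproj, DirectSum.decompose_of_mem_same 𝓜 (hi ▸ hdeg i)]
    · simp [hproj, DirectSum.decompose_of_mem_ne 𝓜 (hdeg i) hi,
        show i ≠ j by rintro rfl; exact hi rfl]
  rw [← b.coord_apply, ← hcoord, LinearMap.comp_apply, hproj,
    DirectSum.decompose_of_mem_ne 𝓜 hx hj.symm, map_zero]

theorem sum_filter_sum_comm_of_deg_ne [Fintype ι] {N : Type*} [AddCommMonoid N]
    (g : ι → ι → N) (hg : ∀ i j, deg i ≠ deg j → g i j = 0) (a : κ) :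
    ∑ i ∈ univ.filter (fun i => deg i = a), ∑ j, g i j =
      ∑ i ∈ univ.filter (fun i => deg i = a), ∑ j, g j i := by
  have hrestrict : ∀ g : ι → ι → N, (∀ i j, deg i ≠ deg j → g i j = 0) →
      ∑ i ∈ univ.filter (fun i => deg i = a), ∑ j, g i j =
        ∑ i ∈ univ.filter (fun i => deg i = a),
          ∑ j ∈ univ.filter (fun j => deg j = a), g i j :=
    fun g hg => sum_congr rfl fun i hi => (sum_subset (subset_univ _) fun j _ hj =>
      hg i j fun h => hj (by simp_all)).symm
  rw [hrestrict g hg, hrestrict (fun i j => g j i) fun i j h => hg j i (Ne.symm h), sum_comm]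

end Grading

theorem LinearMap.eq_zero_of_intertwining_of_irreducible {R X E E' : Type*} [Ring R]
    [AddCommGroup E] [Module R E] [AddCommGroup E'] [Module R E']
    (S : Set X) (ρ : X → Module.End R E) (ρ' : X → Module.End R E')
    (hirr : ∀ W : Submodule R E, (∀ c ∈ S, ∀ w ∈ W, ρ c w ∈ W) → W = ⊥ ∨ W = ⊤)
    (hirr' : ∀ W : Submodule R E', (∀ c ∈ S, ∀ w ∈ W, ρ' c w ∈ W) → W = ⊥ ∨ W = ⊤)
    (hnoniso : ¬ ∃ T : E ≃ₗ[R] E', ∀ c ∈ S, ∀ v : E, T (ρ c v) = ρ' c (T v))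
    {T : E' →ₗ[R] E} (hT : ∀ c ∈ S, ∀ u, ρ c (T u) = T (ρ' c u)) : T = 0 := by
  by_contra hne
  have hker : ker T = ⊥ :=
    (hirr' (ker T) fun c hc u hu => by rw [mem_ker] at hu ⊢; rw [← hT c hc, hu, map_zero])
      |>.resolve_right fun h => hne (ker_eq_top.mp h)
  have hrange : range T = ⊤ :=
    (hirr (range T) fun c hc _ ⟨u, hu⟩ => ⟨ρ' c u, by rw [← hT c hc, hu]⟩)
      |>.resolve_left fun h => hne (range_eq_bot.mp h)
  let e := LinearEquiv.ofBijective T ⟨ker_eq_bot.mp hker, range_eq_top.mp hrange⟩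
  refine hnoniso ⟨e.symm, fun c hc v => e.injective ?_⟩
  have he : ∀ u, e u = T u := fun _ => rfl
  rw [e.apply_symm_apply, he, ← hT c hc, ← he, e.apply_symm_apply]

theorem LinearMap.trace_eq_sum_repr_apply {R M ι : Type*} [CommRing R] [AddCommGroup M]
    [Module R M] [Fintype ι] [DecidableEq ι] (u : Module.Basis ι R M) (g : Module.End R M) :
    trace R M g = ∑ i, u.repr (g (u i)) i := by
  simp [trace_eq_matrix_trace R u, Matrix.trace, LinearMap.toMatrix_apply]

theorem LinearMap.sum_trace_mul_trace_eq_zero {K E E' κ : Type*} [Field K]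
    [AddCommGroup E] [Module K E] [FiniteDimensional K E]
    [AddCommGroup E'] [Module K E'] [FiniteDimensional K E']
    (t : Finset κ) (P : κ → Module.End K E) (Q : κ → Module.End K E')
    (h : ∀ f : E' →ₗ[K] E, ∑ k ∈ t, P k ∘ₗ f ∘ₗ Q k = 0) :
    ∑ k ∈ t, trace K E (P k) * trace K E' (Q k) = 0 := by
  let v := Module.finBasis K E
  let w := Module.finBasis K E'
  -- apply `h` to the rank-one map `w* n ⊗ v m` and read off the `m`-th coordinate at `w n`
  have hcoef : ∀ m n, ∑ k ∈ t, v.repr (P k (v m)) m * w.repr (Q k (w n)) n = 0 :=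
    fun m n => by
    simpa [LinearMap.sum_apply, mul_comm] using
      congr(v.repr ($(h ((w.coord n).smulRight (v m))) (w n)) m)
  calc ∑ k ∈ t, trace K E (P k) * trace K E' (Q k)
      = ∑ m, ∑ n, ∑ k ∈ t, v.repr (P k (v m)) m * w.repr (Q k (w n)) n := by
        simp_rw [trace_eq_sum_repr_apply v, trace_eq_sum_repr_apply w, sum_mul_sum]
        rw [sum_comm]
        exact sum_congr rfl fun m _ => sum_comm
    _ = 0 := by simp [hcoef]

theorem Matrix.posDef_sum_conjTranspose_mul_self {K ι m n : Type*} [CommRing K]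
    [PartialOrder K] [StarRing K] [StarOrderedRing K] [NoZeroDivisors K]
    [Fintype ι] [Fintype m] [Fintype n]
    (M : ι → Matrix m n K) (hM : ∀ z, (∀ i, M i *ᵥ z = 0) → z = 0) :
    (∑ i, (M i)ᴴ * M i).PosDef := by
  refine .of_dotProduct_mulVec_pos
    (isSelfAdjoint_sum univ fun i _ => isHermitian_conjTranspose_mul_self (M i)) fun z hz => ?_
  obtain ⟨i, hi⟩ : ∃ i, M i *ᵥ z ≠ 0 := by
    by_contra! h
    exact hz (hM z h)
  have hquad :
      star z ⬝ᵥ ((∑ i, (M i)ᴴ * M i) *ᵥ z) = ∑ i, star (M i *ᵥ z) ⬝ᵥ (M i *ᵥ z) := by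
    simp [sum_mulVec, dotProduct_sum, ← mulVec_mulVec, dotProduct_mulVec, star_mulVec]
  rw [hquad]
  exact sum_pos' (fun i _ => dotProduct_star_self_nonneg _)
    ⟨i, mem_univ i, (dotProduct_star_self_nonneg _).lt_of_ne'
      (dotProduct_star_self_eq_zero.not.mpr hi)⟩

section BasedStarAlgebra

variable {A ι : Type*} [Ring A] [Algebra ℂ A] [Fintype ι] [DecidableEq ι]
  (b : Module.Basis ι ℂ A) (τ : A →ₗ[ℂ] ℂ) (s : A →ₗ⋆[ℂ] A)

theorem repr_apply_eq_trace_mul_involution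
    (horth : ∀ i j, τ (b i * s (b j)) = if i = j then 1 else 0) (x : A) (j : ι) :
    b.repr x j = τ (x * s (b j)) := by
  conv_rhs => rw [← b.sum_repr x]
  simp [-Module.Basis.sum_repr, Finset.sum_mul, horth]

theorem trace_mul_involution_eq_sum_repr_mul_conj
    (horth : ∀ i j, τ (b i * s (b j)) = if i = j then 1 else 0) (x y : A) :
    τ (x * s y) = ∑ j, b.repr x j * starRingEnd ℂ (b.repr y j) := by
  conv_lhs => rw [← b.sum_repr y]
  simp [-Module.Basis.sum_repr, Finset.mul_sum,
    ← repr_apply_eq_trace_mul_involution b τ s horth, mul_comm]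

theorem conj_trace_mul_involution
    (horth : ∀ i j, τ (b i * s (b j)) = if i = j then 1 else 0) (x y : A) :
    starRingEnd ℂ (τ (x * s y)) = τ (y * s x) := by
  simp [trace_mul_involution_eq_sum_repr_mul_conj b τ s horth, mul_comm]

theorem repr_basis_mul_involution_eq_conj
    (horth : ∀ i j, τ (b i * s (b j)) = if i = j then 1 else 0)
    (hs_mul : ∀ x y, s (x * y) = s y * s x) (x : A) (i j : ι) :
    b.repr (b j * s x) i = starRingEnd ℂ (b.repr (b i * x) j) := by
  simp only [repr_apply_eq_trace_mul_involution b τ s horth]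
  rw [conj_trace_mul_involution b τ s horth, hs_mul, mul_assoc]

theorem involution_basis_mul_eq_sum
    (horth : ∀ i j, τ (b i * s (b j)) = if i = j then 1 else 0)
    (hs_mul : ∀ x y, s (x * y) = s y * s x) (hs_invol : ∀ x, s (s x) = x)
    (hsym : ∀ x y, τ (x * y) = τ (y * x)) (c : A) (i : ι) :
    s (b i) * c = ∑ j, b.repr (c * b j) i • s (b j) := by
  have hcoef : ∀ j, starRingEnd ℂ (b.repr (s c * b i) j) = b.repr (c * b j) i := fun j => by
    simp only [repr_apply_eq_trace_mul_involution b τ s horth]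
    rw [conj_trace_mul_involution b τ s horth, hs_mul, hs_invol, ← mul_assoc, hsym, ← mul_assoc]
  calc s (b i) * c = s (s c * b i) := by rw [hs_mul, hs_invol]
    _ = ∑ j, b.repr (c * b j) i • s (b j) := by
      conv_lhs => rw [← b.sum_repr (s c * b i)]
      simp [-Module.Basis.sum_repr, hcoef]

theorem sum_filter_deg_mul_basis_eq_sum_filter_deg_basis_mul {κ : Type*} [DecidableEq κ]
    [AddMonoid κ]
    (𝒜 : κ → Submodule ℂ A) [GradedAlgebra 𝒜] (deg : ι → κ) (hdeg : ∀ i, b i ∈ 𝒜 (deg i))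
    (horth : ∀ i j, τ (b i * s (b j)) = if i = j then 1 else 0)
    (hs_mul : ∀ x y, s (x * y) = s y * s x) (hs_invol : ∀ x, s (s x) = x)
    (hsym : ∀ x y, τ (x * y) = τ (y * x))
    {M : Type*} [AddCommGroup M] [Module ℂ M] (F : A →ₗ[ℂ] A →ₗ[ℂ] M)
    {c : A} (hc : c ∈ 𝒜 0) (a : κ) :
    ∑ i ∈ univ.filter (fun i => deg i = a), F (c * b i) (s (b i)) =
      ∑ i ∈ univ.filter (fun i => deg i = a), F (b i) (s (b i) * c) := by
  have hvanish : ∀ i j, deg i ≠ deg j → b.repr (c * b i) j • F (b j) (s (b i)) = 0 :=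
    fun i j hij => by
      have hmem : c * b i ∈ 𝒜 (deg i) := by simpa using SetLike.mul_mem_graded hc (hdeg i)
      rw [b.repr_eq_zero_of_mem_of_deg_ne 𝒜 deg hdeg hmem hij.symm, zero_smul]
  calc ∑ i ∈ univ.filter (fun i => deg i = a), F (c * b i) (s (b i))
      = ∑ i ∈ univ.filter (fun i => deg i = a), ∑ j, b.repr (c * b i) j • F (b j) (s (b i)) :=
        sum_congr rfl fun i _ => by
          conv_lhs => rw [← b.sum_repr (c * b i)]
          simp [-Module.Basis.sum_repr]
    _ = ∑ i ∈ univ.filter (fun i => deg i = a), ∑ j, b.repr (c * b j) i • F (b i) (s (b j)) :=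
        sum_filter_sum_comm_of_deg_ne deg _ hvanish a
    _ = ∑ i ∈ univ.filter (fun i => deg i = a), F (b i) (s (b i) * c) := by
        simp [involution_basis_mul_eq_sum b τ s horth hs_mul hs_invol hsym]

theorem Matrix.trace_apply_involution_eq_conj {n : Type*} [Fintype n] [DecidableEq n]
    (horth : ∀ i j, τ (b i * s (b j)) = if i = j then 1 else 0)
    (hs_mul : ∀ x y, s (x * y) = s y * s x) (ρ : A →ₐ[ℂ] Matrix n n ℂ) (x : A) :
    (ρ (s x)).trace = starRingEnd ℂ (ρ x).trace := by
  have hexpand : ∀ y, ρ y = ∑ j, b.repr y j • ρ (b j) := fun y => by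
    conv_lhs => rw [← b.sum_repr y]
    simp [-Module.Basis.sum_repr]
  -- `G` is the Gram matrix of an inner product for which `ρ (s x)` is the adjoint of `ρ x`
  set G := ∑ i, (ρ (b i))ᴴ * ρ (b i)
  have hG : G.PosDef := Matrix.posDef_sum_conjTranspose_mul_self _ fun z hz => by
    have : ρ 1 *ᵥ z = 0 := by simp [hexpand 1, Matrix.sum_mulVec, Matrix.smul_mulVec, hz]
    simpa using this
  have hinv : G * ρ (s x) = (ρ x)ᴴ * G := by
    calc G * ρ (s x) = ∑ j, ∑ i, b.repr (b j * s x) i • ((ρ (b j))ᴴ * ρ (b i)) := by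
          simp [G, Finset.sum_mul, Matrix.mul_assoc, ← map_mul, hexpand (_ * s x), Finset.mul_sum]
      _ = ∑ i, ∑ j, starRingEnd ℂ (b.repr (b i * x) j) • ((ρ (b j))ᴴ * ρ (b i)) := by
          rw [sum_comm]
          simp [repr_basis_mul_involution_eq_conj b τ s horth hs_mul]
      _ = (ρ x)ᴴ * G := by
          simp [G, Finset.mul_sum, ← Matrix.mul_assoc, ← Matrix.conjTranspose_mul, ← map_mul,
            hexpand (b _ * x), Matrix.conjTranspose_sum, Finset.sum_mul]
  have hU := hG.isUnit
  calc (ρ (s x)).trace = (G⁻¹ * (ρ x)ᴴ * G).trace := by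
        rw [Matrix.mul_assoc, ← hinv, ← Matrix.mul_assoc,
          Matrix.nonsing_inv_mul _ ((Matrix.isUnit_iff_isUnit_det G).mp hU), Matrix.one_mul]
    _ = starRingEnd ℂ (ρ x).trace := by
        rw [Matrix.trace_conj' hU, Matrix.trace_conjTranspose]
        rfl

theorem LinearMap.trace_apply_involution_eq_conj {E : Type*} [AddCommGroup E] [Module ℂ E]
    [FiniteDimensional ℂ E]
    (horth : ∀ i j, τ (b i * s (b j)) = if i = j then 1 else 0)
    (hs_mul : ∀ x y, s (x * y) = s y * s x) (Θ : A →ₐ[ℂ] Module.End ℂ E) (x : A) :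
    trace ℂ E (Θ (s x)) = starRingEnd ℂ (trace ℂ E (Θ x)) := by
  let w := Module.finBasis ℂ E
  rw [trace_eq_matrix_trace ℂ w, trace_eq_matrix_trace ℂ w]
  exact Matrix.trace_apply_involution_eq_conj b τ s horth hs_mul
    ((LinearMap.toMatrixAlgEquiv w).toAlgHom.comp Θ) x

end BasedStarAlgebra

theorem stmt10_general {A : Type*} [Ring A] [Algebra ℂ A]
    {N : ℕ} (𝒜 : ZMod N → Submodule ℂ A) [GradedAlgebra 𝒜]
    {ι : Type*} [Fintype ι] [DecidableEq ι]
    (b : Module.Basis ι ℂ A) (deg : ι → ZMod N) (hdeg : ∀ i, b i ∈ 𝒜 (deg i))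
    (τ : A →ₗ[ℂ] ℂ) (s : A → A)
    (hs_add : ∀ x y : A, s (x + y) = s x + s y)
    (hs_smul : ∀ (c : ℂ) (x : A), s (c • x) = (starRingEnd ℂ) c • s x)
    (hs_mul : ∀ x y : A, s (x * y) = s y * s x)
    (hs_invol : ∀ x : A, s (s x) = x)
    (hsym : ∀ x y : A, τ (x * y) = τ (y * x))
    (horth : ∀ i j : ι, τ (b i * s (b j)) = if i = j then 1 else 0)
    {E E' : Type*} [AddCommGroup E] [Module ℂ E] [FiniteDimensional ℂ E]
    [AddCommGroup E'] [Module ℂ E'] [FiniteDimensional ℂ E']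
    (Θ : A →ₐ[ℂ] Module.End ℂ E) (Θ' : A →ₐ[ℂ] Module.End ℂ E')
    (hirr0 : ∀ W : Submodule ℂ E, (∀ c ∈ 𝒜 0, ∀ w ∈ W, Θ c w ∈ W) → W = ⊥ ∨ W = ⊤)
    (hirr0' : ∀ W : Submodule ℂ E', (∀ c ∈ 𝒜 0, ∀ w ∈ W, Θ' c w ∈ W) → W = ⊥ ∨ W = ⊤)
    (hnoniso : ¬ ∃ T : E ≃ₗ[ℂ] E', ∀ c ∈ 𝒜 0, ∀ v : E, T (Θ c v) = Θ' c (T v)) :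
    ∀ a : ZMod N,
      ∑ i ∈ Finset.univ.filter (fun i => deg i = a),
          LinearMap.trace ℂ E (Θ (b i)) * (starRingEnd ℂ) (LinearMap.trace ℂ E' (Θ' (b i)))
        = 0 := by
  intro a
  let s' : A →ₗ⋆[ℂ] A := { toFun := s, map_add' := hs_add, map_smul' := hs_smul }
  have hsandwich : ∀ f : E' →ₗ[ℂ] E,
      ∑ i ∈ univ.filter (fun i => deg i = a), Θ (b i) ∘ₗ f ∘ₗ Θ' (s (b i)) = 0 := fun f =>
    LinearMap.eq_zero_of_intertwining_of_irreducible (𝒜 0 : Set A) Θ Θ' hirr0 hirr0' hnoniso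
      fun c hc u => by
        have := sum_filter_deg_mul_basis_eq_sum_filter_deg_basis_mul b τ s' 𝒜 deg hdeg horth
          hs_mul hs_invol hsym ((LinearMap.llcomp ℂ E' E E).compl₁₂ Θ.toLinearMap
            (LinearMap.llcomp ℂ E' E' E f ∘ₗ Θ'.toLinearMap)) hc a
        simpa [LinearMap.sum_apply, map_sum, s'] using LinearMap.congr_fun this u
  have hconj :
      ∀ x, LinearMap.trace ℂ E' (Θ' (s x)) = starRingEnd ℂ (LinearMap.trace ℂ E' (Θ' x)) :=
    LinearMap.trace_apply_involution_eq_conj b τ s' horth hs_mul Θ'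
  simpa [hconj] using LinearMap.sum_trace_mul_trace_eq_zero _ _ _ hsandwich

/-- Let `A = ⨁_{a ∈ ℤ/N} A_a` be a `ℤ/N`-graded semisimple based `*`-algebra
over `ℂ` (homogeneous distinguished basis `b`, orthonormal for `⟨c,d⟩ = τ (c * s d)`). Let
`Ẽ` and `Ẽ'` (given by `Θ : A → End E`, `Θ' : A → End E'`) be irreducible `A`-modules whose
restrictions to `A_0` are irreducible and non-isomorphic `A_0`-modules. Then for every
`a ∈ ℤ/N`, the restrictions of their characters to the degree-`a` component are orthogonal:
`Σ_{basis elements b of degree a} χ_{Ẽ}(b)·conj(χ_{Ẽ'}(b)) = 0`. -/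
theorem stmt10 {A : Type*} [Ring A] [Algebra ℂ A] [FiniteDimensional ℂ A] [IsSemisimpleRing A]
    {N : ℕ} (𝒜 : ZMod N → Submodule ℂ A) [GradedAlgebra 𝒜]
    {ι : Type*} [Fintype ι] [DecidableEq ι]
    (b : Module.Basis ι ℂ A) (deg : ι → ZMod N) (hdeg : ∀ i, b i ∈ 𝒜 (deg i))
    (τ : A →ₗ[ℂ] ℂ) (s : A → A)
    (hs_add : ∀ x y : A, s (x + y) = s x + s y)
    (hs_smul : ∀ (c : ℂ) (x : A), s (c • x) = (starRingEnd ℂ) c • s x)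
    (hs_mul : ∀ x y : A, s (x * y) = s y * s x)
    (hs_invol : ∀ x : A, s (s x) = x)
    (hs_basis : ∀ i : ι, ∃ j : ι, s (b i) = b j)
    (hsym : ∀ x y : A, τ (x * y) = τ (y * x))
    (horth : ∀ i j : ι, τ (b i * s (b j)) = if i = j then 1 else 0)
    {E E' : Type*} [AddCommGroup E] [Module ℂ E] [FiniteDimensional ℂ E] [Nontrivial E]
    [AddCommGroup E'] [Module ℂ E'] [FiniteDimensional ℂ E'] [Nontrivial E']
    (Θ : A →ₐ[ℂ] Module.End ℂ E) (Θ' : A →ₐ[ℂ] Module.End ℂ E')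
    (hirr0 : ∀ W : Submodule ℂ E, (∀ c ∈ 𝒜 0, ∀ w ∈ W, Θ c w ∈ W) → W = ⊥ ∨ W = ⊤)
    (hirr0' : ∀ W : Submodule ℂ E', (∀ c ∈ 𝒜 0, ∀ w ∈ W, Θ' c w ∈ W) → W = ⊥ ∨ W = ⊤)
    (hnoniso : ¬ ∃ T : E ≃ₗ[ℂ] E', ∀ c ∈ 𝒜 0, ∀ v : E, T (Θ c v) = Θ' c (T v)) :
    ∀ a : ZMod N,
      ∑ i ∈ Finset.univ.filter (fun i => deg i = a),
          LinearMap.trace ℂ E (Θ (b i)) * (starRingEnd ℂ) (LinearMap.trace ℂ E' (Θ' (b i)))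
        = 0 :=
  stmt10_general 𝒜 b deg hdeg τ s hs_add hs_smul hs_mul hs_invol hsym horth Θ Θ' hirr0 hirr0'
    hnoniso
end
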